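/- Let (S, E, P) be a prepare-and-measure data table and let (E_R, S_R) with matrices (Q, R) be a faithful reference which moreover separates preparation densities, i.e., for all preparation densities μ, μ', μ ~_{E_R} μ' implies μ = μ'. Then (S, E, P) admits a relative noncontextual ontological model with respect to (E_R, S_R). -/
import Mathlib


open Finset

/-- A preparation density on a finite set `S` of preparations. -/
def IsPrepDensity {S : Type*} [Fintype S] (μ : S → ℝ) : Prop :=
  (∀ p, 0 ≤ μ p) ∧ ∑ p, μ p = 1

/-- An effect density on a finite set `E` of effects. -/
def IsEffDensity {E : Type*} [Fintype E] (ν : E → ℝ) : Prop :=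
  (∀ e, 0 ≤ ν e) ∧ ∑ e, ν e = 1

/-- Indistinguishability of preparation densities w.r.t. reference effects `ER`
with matrix `Q`. -/
def PrepIndist {S ER : Type*} [Fintype S] (Q : ER → S → ℝ) (μ μ' : S → ℝ) : Prop :=
  ∀ f, ∑ p, μ p * Q f p = ∑ p, μ' p * Q f p

/-- Indistinguishability of effect densities w.r.t. reference preparations `SR`
with matrix `R`. -/
def EffIndist {E SR : Type*} [Fintype E] (R : E → SR → ℝ) (ν ν' : E → ℝ) : Prop :=
  ∀ q, ∑ e, ν e * R e q = ∑ e, ν' e * R e q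

/-- An ontological model (ontic space `Λ`, ontic state distributions `μhat`,
ontic response functions `ξhat`) for the PM data table `(S, E, P)`. -/
def IsOntModel {S E Λ : Type*} [Fintype S] [Fintype E] [Fintype Λ]
    (P : E → S → ℝ) (μhat : S → Λ → ℝ) (ξhat : E → Λ → ℝ) : Prop :=
  (∀ p l, 0 ≤ μhat p l) ∧ (∀ p, ∑ l, μhat p l = 1) ∧
  (∀ e l, 0 ≤ ξhat e l ∧ ξhat e l ≤ 1) ∧
  (∀ e p, P e p = ∑ l, ξhat e l * μhat p l)

/-- The ontological model is relative noncontextual w.r.t. the reference `(ER, SR)`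
with matrices `(Q, R)`: indistinguishable preparation (effect) densities get the same
extended ontic state distribution (response function). -/
def IsRNC {S E ER SR Λ : Type*} [Fintype S] [Fintype E] [Fintype Λ]
    (Q : ER → S → ℝ) (R : E → SR → ℝ)
    (μhat : S → Λ → ℝ) (ξhat : E → Λ → ℝ) : Prop :=
  (∀ μ μ' : S → ℝ, IsPrepDensity μ → IsPrepDensity μ' → PrepIndist Q μ μ' →
    ∀ l, ∑ p, μ p * μhat p l = ∑ p, μ' p * μhat p l) ∧
  (∀ ν ν' : E → ℝ, IsEffDensity ν → IsEffDensity ν' → EffIndist R ν ν' →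
    ∀ l, ∑ e, ν e * ξhat e l = ∑ e, ν' e * ξhat e l)

/-- The PM data table `(S, E, P)` admits a relative noncontextual ontological model
w.r.t. the reference `(ER, SR)` with matrices `(Q, R)`. -/
def AdmitsRNC {S E ER SR : Type*} [Fintype S] [Fintype E]
    (P : E → S → ℝ) (Q : ER → S → ℝ) (R : E → SR → ℝ) : Prop :=
  ∃ (n : ℕ) (μhat : S → Fin n → ℝ) (ξhat : E → Fin n → ℝ),
    IsOntModel P μhat ξhat ∧ IsRNC Q R μhat ξhat

/-- The reference `(ER, SR)` with matrices `(Q, R)` is faithful w.r.t. the PM data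
table `(S, E, P)`. -/
def FaithfulRef {S E ER SR : Type*} [Fintype S] [Fintype E]
    (P : E → S → ℝ) (Q : ER → S → ℝ) (R : E → SR → ℝ) : Prop :=
  (∀ μ μ' : S → ℝ, IsPrepDensity μ → IsPrepDensity μ' → PrepIndist Q μ μ' →
    PrepIndist P μ μ') ∧
  (∀ ν ν' : E → ℝ, IsEffDensity ν → IsEffDensity ν' → EffIndist R ν ν' →
    EffIndist P ν ν')

/-- a faithful reference that separates preparation densities admits a
relative noncontextual ontological model. -/
theorem admitsRNC_of_faithful_separating
    {S E ER SR : Type*} [Fintype S] [Fintype E] [Fintype ER] [Fintype SR]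
    (P : E → S → ℝ) (hP : ∀ e p, 0 ≤ P e p ∧ P e p ≤ 1)
    (Q : ER → S → ℝ) (hQ : ∀ f p, 0 ≤ Q f p ∧ Q f p ≤ 1)
    (R : E → SR → ℝ) (hR : ∀ e q, 0 ≤ R e q ∧ R e q ≤ 1)
    (hfaithful : FaithfulRef P Q R)
    (hsep : ∀ μ μ' : S → ℝ, IsPrepDensity μ → IsPrepDensity μ' →
      PrepIndist Q μ μ' → μ = μ') :
    AdmitsRNC P Q R := by
  classical
  obtain ⟨n, ⟨eqv⟩⟩ : ∃ n, Nonempty (S ≃ Fin n) := ⟨Fintype.card S, ⟨Fintype.equivFin S⟩⟩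
  refine ⟨n, fun p l => if eqv p = l then 1 else 0, fun e l => P e (eqv.symm l),
    ⟨?_, ?_, ?_, ?_⟩, ?_, ?_⟩
  · intro p l; dsimp only; split <;> norm_num
  · intro p; simp
  · intro e l; exact hP e _
  · intro e p
    rw [Finset.sum_eq_single (eqv p)]
    · simp
    · intro b _ hb; simp [Ne.symm hb]
    · intro h; exact absurd (Finset.mem_univ _) h
  · intro μ μ' hμ hμ' hind l
    rw [hsep μ μ' hμ hμ' hind]
  · intro ν ν' hν hν' hind l
    exact hfaithful.2 ν ν' hν hν' hind (eqv.symm l)
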